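/- Let f₀ ∈ C_p(Z) be nonzero and let Y = span{f₀}. Then Y has property-SNP in C_p(Z) with respect to 𝒫 if and only if |f₀| attains its supremum at exactly one point, i.e., the set {x ∈ Z : |f₀(y)| ≤ |f₀(x)| for all y ∈ Z} is a singleton. -/

import Mathlib

open scoped ENNReal Classical

set_option maxHeartbeats 1000000
set_option synthInstance.maxHeartbeats 1000000

noncomputable section

/-- The space `C_p(Z)` of continuous real-valued functions on `Z`, as a submodule of
`Z → ℝ`; its subspace topology is the topology of pointwise convergence. -/
def Cp (Z : Type*) [TopologicalSpace Z] : Submodule ℝ (Z → ℝ) where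
  carrier := {f | Continuous f}
  add_mem' hf hg := hf.add hg
  zero_mem' := continuous_const
  smul_mem' c f hf := hf.const_smul c

/-- The generating seminorm `ρ_F(f) = max_{x ∈ F} |f x|` of the topology of
pointwise convergence, for a finite `F ⊆ Z`. -/
def rhoP {Z : Type*} [TopologicalSpace Z] (F : Finset Z) (f : Cp Z) : ℝ :=
  ⨆ x ∈ F, |(f : Z → ℝ) x|

/-- `χ_ρ(g) = sup { |g v| : ρ v ≤ 1 } ∈ [0,∞]`. -/
def chi {V : Type*} [AddCommGroup V] [Module ℝ V] [TopologicalSpace V]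
    (ρ : V → ℝ) (g : V →L[ℝ] ℝ) : ℝ≥0∞ :=
  ⨆ v ∈ {v : V | ρ v ≤ 1}, ENNReal.ofReal |g v|

/-- `χ_ρ^W(f)` for a functional `f` on a subspace `W`. -/
def chiSub {V : Type*} [AddCommGroup V] [Module ℝ V] [TopologicalSpace V]
    (W : Submodule ℝ V) (ρ : V → ℝ) (f : W →L[ℝ] ℝ) : ℝ≥0∞ :=
  chi (fun w : W => ρ (w : V)) f

/-- `ft` is a Hahn-Banach extension of the pair `(f, ρ)` on the subspace `W`. -/
def IsHBE {V : Type*} [AddCommGroup V] [Module ℝ V] [TopologicalSpace V]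
    (W : Submodule ℝ V) (ρ : V → ℝ) (f : W →L[ℝ] ℝ) (ft : V →L[ℝ] ℝ) : Prop :=
  ft.comp W.subtypeL = f ∧ chi ρ ft = chiSub W ρ f

/-- Property-SNP of a subspace `W` with respect to the family `p` of seminorms. -/
def SNP {V : Type*} [AddCommGroup V] [Module ℝ V] [TopologicalSpace V]
    {ι : Type*} (p : ι → V → ℝ) (W : Submodule ℝ V) : Prop :=
  ∀ f : W →L[ℝ] ℝ, ∃ i, chiSub W (p i) f < ⊤ ∧ ∃ ft : V →L[ℝ] ℝ,
    ∀ j, (∀ v, p i v ≤ p j v) →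
      IsHBE W (p j) f ft ∧ ∀ g : V →L[ℝ] ℝ, IsHBE W (p j) f g → g = ft

section RhoP

variable {Z : Type*} [TopologicalSpace Z] {F G : Finset Z} {f : Cp Z}

lemma rhoP_eq : rhoP F f = ⨆ x, if x ∈ F then |(f : Z → ℝ) x| else 0 := by
  unfold rhoP
  congr 1; funext x
  split
  · next h => exact ciSup_pos h
  · next h =>
      haveI : IsEmpty (x ∈ F) := ⟨h⟩
      exact Real.iSup_of_isEmpty _

lemma rhoP_bdd : BddAbove (Set.range fun x => if x ∈ F then |(f : Z → ℝ) x| else 0) := by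
  refine ⟨∑ x ∈ F, |(f : Z → ℝ) x|, ?_⟩
  rintro r ⟨x, rfl⟩
  dsimp only
  split
  · next h => exact Finset.single_le_sum (f := fun x => |(f : Z → ℝ) x|) (fun _ _ => abs_nonneg _) h
  · exact Finset.sum_nonneg fun _ _ => abs_nonneg _

lemma le_rhoP {x : Z} (hx : x ∈ F) : |(f : Z → ℝ) x| ≤ rhoP F f := by
  rw [rhoP_eq]
  have := le_ciSup (rhoP_bdd (F := F) (f := f)) x
  simpa [hx] using this

lemma rhoP_le {m : ℝ} (hm : 0 ≤ m) (h : ∀ x ∈ F, |(f : Z → ℝ) x| ≤ m) : rhoP F f ≤ m := by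
  rw [rhoP_eq]
  refine Real.iSup_le (fun x => ?_) hm
  split
  · next hx => exact h x hx
  · exact hm

lemma rhoP_nonneg : 0 ≤ rhoP F f := by
  rw [rhoP_eq]
  exact Real.iSup_nonneg fun x => by split <;> simp [abs_nonneg]

lemma rhoP_mono (hFG : F ⊆ G) : rhoP F f ≤ rhoP G f :=
  rhoP_le rhoP_nonneg fun x hx => le_rhoP (hFG hx)

lemma rhoP_exists_max (hF : F.Nonempty) : ∃ x ∈ F, rhoP F f = |(f : Z → ℝ) x| := by
  obtain ⟨x, hx, hmax⟩ := F.exists_max_image (fun x => |(f : Z → ℝ) x|) hF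
  exact ⟨x, hx, le_antisymm (rhoP_le (abs_nonneg _) hmax) (le_rhoP hx)⟩

lemma coe_smul (t : ℝ) (f : Cp Z) (x : Z) : ((t • f : Cp Z) : Z → ℝ) x = t * (f : Z → ℝ) x := rfl

lemma rhoP_smul (t : ℝ) : rhoP F (t • f) = |t| * rhoP F f := by
  have key : ∀ (s : ℝ) (g : Cp Z), rhoP F (s • g) ≤ |s| * rhoP F g := by
    intro s g
    refine rhoP_le (mul_nonneg (abs_nonneg _) rhoP_nonneg) fun x hx => ?_
    rw [coe_smul, abs_mul]
    exact mul_le_mul_of_nonneg_left (le_rhoP hx) (abs_nonneg _)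
  rcases eq_or_ne t 0 with rfl | ht
  · simp only [zero_smul, abs_zero, zero_mul]
    refine le_antisymm (rhoP_le le_rfl fun x _ => by simp) rhoP_nonneg
  · refine le_antisymm (key t f) ?_
    have := key t⁻¹ (t • f)
    rw [inv_smul_smul₀ ht, abs_inv] at this
    calc |t| * rhoP F f ≤ |t| * (|t|⁻¹ * rhoP F (t • f)) := by
          exact mul_le_mul_of_nonneg_left this (abs_nonneg _)
      _ = rhoP F (t • f) := by field_simp

end RhoP

section ChiGen
variable {V : Type*} [AddCommGroup V] [Module ℝ V] [TopologicalSpace V]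
  {ρ : V → ℝ} {g : V →L[ℝ] ℝ}

lemma le_chi {v : V} (hv : ρ v ≤ 1) : ENNReal.ofReal |g v| ≤ chi ρ g :=
  le_iSup₂ (f := fun (v : V) (_ : v ∈ {v : V | ρ v ≤ 1}) => ENNReal.ofReal |g v|) v hv

lemma chi_le {C : ℝ} (h : ∀ v, ρ v ≤ 1 → |g v| ≤ C) : chi ρ g ≤ ENNReal.ofReal C :=
  iSup₂_le fun v hv => ENNReal.ofReal_le_ofReal (h v hv)

end ChiGen

section Sep
variable {Z : Type*} [TopologicalSpace Z] [T35Space Z]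

lemma exists_sep (G : Finset Z) {x : Z} (hx : x ∉ G) :
    ∃ e : Cp Z, (e : Z → ℝ) x = 1 ∧ ∀ y ∈ G, (e : Z → ℝ) y = 0 := by
  have hK : IsClosed (G : Set Z) := G.finite_toSet.isClosed
  obtain ⟨u, hu, hux, huK⟩ :=
    CompletelyRegularSpace.completely_regular x (G : Set Z) hK (by simpa using hx)
  refine ⟨⟨fun z => 1 - (u z : ℝ), by
    exact continuous_const.sub (continuous_subtype_val.comp hu)⟩, ?_, ?_⟩
  · show 1 - ((u x : ℝ)) = 1
    rw [hux]; norm_num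
  · intro y hy
    show 1 - ((u y : ℝ)) = 0
    have : u y = 1 := huK (by simpa using hy)
    rw [this]; norm_num

/-- evaluation functional -/
def ev (x : Z) : Cp Z →L[ℝ] ℝ :=
  (ContinuousLinearMap.proj x).comp (Cp Z).subtypeL

@[simp] lemma ev_apply (x : Z) (h : Cp Z) : ev x h = (h : Z → ℝ) x := rfl

end Sep

section Main
variable {Z : Type*} [TopologicalSpace Z] [T35Space Z]

lemma real_aux {A B : ℝ} (h : ∀ t : ℝ, |A + t * B| ≤ |A|) : B = 0 := by
  by_contra hB
  have := h ((|A| + 1 - A) / B)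
  rw [div_mul_cancel₀ _ hB] at this
  have h1 : A + (|A| + 1 - A) = |A| + 1 := by ring
  rw [h1, abs_of_nonneg (by positivity)] at this
  linarith

lemma vanish {g : Cp Z →L[ℝ] ℝ} {G : Finset Z} {w : Cp Z} (hw : rhoP G w ≤ 1)
    (hchi : chi (rhoP G) g ≤ ENNReal.ofReal |g w|)
    {h : Cp Z} (hh : ∀ x ∈ G, (h : Z → ℝ) x = 0) : g h = 0 := by
  refine real_aux (A := g w) fun t => ?_
  have h1 : rhoP G (w + t • h) ≤ 1 := by
    refine rhoP_le zero_le_one fun x hx => ?_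
    have : ((w + t • h : Cp Z) : Z → ℝ) x = (w : Z → ℝ) x := by
      show (w : Z → ℝ) x + t * (h : Z → ℝ) x = _
      rw [hh x hx]; ring
    rw [this]
    exact le_trans (le_rhoP hx) hw
  have h2 := le_trans (le_chi h1) hchi
  rw [ENNReal.ofReal_le_ofReal_iff (abs_nonneg _)] at h2
  simpa [map_add, map_smul, smul_eq_mul] using h2

lemma rep {g : Cp Z →L[ℝ] ℝ} {G : Finset Z}
    (hv : ∀ h : Cp Z, (∀ x ∈ G, (h : Z → ℝ) x = 0) → g h = 0) :
    ∃ a : Z → ℝ, ∀ h : Cp Z, g h = ∑ x ∈ G, a x * (h : Z → ℝ) x := by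
  choose e he1 he2 using fun x : Z => exists_sep (G.erase x) (Finset.notMem_erase x G)
  refine ⟨fun x => g (e x), fun h => ?_⟩
  have key : g (h - ∑ x ∈ G, (h : Z → ℝ) x • e x) = 0 := by
    refine hv _ fun y hy => ?_
    have hsum : ((∑ x ∈ G, (h : Z → ℝ) x • e x : Cp Z) : Z → ℝ) y
        = ∑ x ∈ G, (h : Z → ℝ) x * (e x : Z → ℝ) y := by
      rw [AddSubmonoidClass.coe_finset_sum, Finset.sum_apply]
      rfl
    show (h : Z → ℝ) y - _ = 0
    rw [hsum, Finset.sum_eq_single y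
      (fun b hb hby => by rw [he2 b y (Finset.mem_erase.mpr ⟨(Ne.symm hby), hy⟩), mul_zero])
      (fun hyn => absurd hy hyn)]
    rw [he1 y, mul_one]; ring
  rw [map_sub, map_sum, sub_eq_zero] at key
  rw [key]
  congr 1; funext x
  rw [map_smul, smul_eq_mul, mul_comm]

lemma chi_dirac {g : Cp Z →L[ℝ] ℝ} {G : Finset Z} {a : Z → ℝ}
    (hg : ∀ h : Cp Z, g h = ∑ x ∈ G, a x * (h : Z → ℝ) x) :
    chi (rhoP G) g = ENNReal.ofReal (∑ x ∈ G, |a x|) := by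
  refine le_antisymm (chi_le fun v hv => ?_) ?_
  · rw [hg v]
    calc |∑ x ∈ G, a x * (v : Z → ℝ) x| ≤ ∑ x ∈ G, |a x * (v : Z → ℝ) x| :=
          Finset.abs_sum_le_sum_abs _ _
      _ ≤ ∑ x ∈ G, |a x| := by
          refine Finset.sum_le_sum fun x hx => ?_
          rw [abs_mul]
          calc |a x| * |(v : Z → ℝ) x| ≤ |a x| * 1 :=
                mul_le_mul_of_nonneg_left (le_trans (le_rhoP hx) hv) (abs_nonneg _)
            _ = |a x| := mul_one _
  · choose e he1 he2 using fun x : Z => exists_sep (G.erase x) (Finset.notMem_erase x G)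
    set s : Z → ℝ := fun x => if a x = 0 then 0 else a x / |a x| with hs
    have hsle : ∀ x, |s x| ≤ 1 := by
      intro x
      rw [hs]; dsimp only
      split
      · simp
      · next hax => rw [abs_div, abs_abs, div_self (abs_ne_zero.mpr hax)]
    set h : Cp Z := ∑ x ∈ G, s x • e x with hh
    have hval : ∀ y ∈ G, (h : Z → ℝ) y = s y := by
      intro y hy
      rw [hh]
      show ((∑ x ∈ G, s x • e x : Cp Z) : Z → ℝ) y = s y
      rw [AddSubmonoidClass.coe_finset_sum, Finset.sum_apply]
      rw [Finset.sum_eq_single y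
        (fun b hb hby => by
          show s b * (e b : Z → ℝ) y = 0
          rw [he2 b y (Finset.mem_erase.mpr ⟨Ne.symm hby, hy⟩), mul_zero])
        (fun hyn => absurd hy hyn)]
      show s y * (e y : Z → ℝ) y = s y
      rw [he1 y, mul_one]
    have hrho : rhoP G h ≤ 1 := rhoP_le zero_le_one fun x hx => by
      rw [hval x hx]; exact hsle x
    have hgh : g h = ∑ x ∈ G, |a x| := by
      rw [hg h]
      refine Finset.sum_congr rfl fun x hx => ?_
      rw [hval x hx, hs]
      dsimp only
      split
      · next hax => rw [hax]; simp
      · next hax =>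
          rw [mul_div_assoc', ← abs_mul_abs_self, mul_div_assoc,
            div_self (abs_ne_zero.mpr hax), mul_one]
    calc ENNReal.ofReal (∑ x ∈ G, |a x|) = ENNReal.ofReal |g h| := by
          rw [hgh, abs_of_nonneg (Finset.sum_nonneg fun x _ => abs_nonneg _)]
      _ ≤ chi (rhoP G) g := le_chi hrho

end Main

section Span
variable {Z : Type*} [TopologicalSpace Z] (f₀ : Cp Z)

lemma mem_self : f₀ ∈ (ℝ ∙ f₀) := Submodule.mem_span_singleton_self f₀

lemma chiSub_span (F : Finset Z) (f : (ℝ ∙ f₀) →L[ℝ] ℝ) (hr : 0 < rhoP F f₀) :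
    chiSub (ℝ ∙ f₀) (rhoP F) f
      = ENNReal.ofReal (|f ⟨f₀, mem_self f₀⟩| / rhoP F f₀) := by
  set c := f ⟨f₀, mem_self f₀⟩ with hc
  set r := rhoP F f₀ with hrr
  refine le_antisymm (iSup₂_le fun w hw => ?_) ?_
  · obtain ⟨t, ht⟩ := Submodule.mem_span_singleton.mp w.2
    have hwt : w = t • (⟨f₀, mem_self f₀⟩ : (ℝ ∙ f₀)) := Subtype.ext ht.symm
    have hfw : f w = t * c := by rw [hwt, map_smul, smul_eq_mul, hc]
    have hwr : rhoP F (w : Cp Z) = |t| * r := by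
      rw [← ht, rhoP_smul]
    simp only [Set.mem_setOf_eq] at hw
    rw [hwr] at hw
    have htle : |t| ≤ 1 / r := by
      rw [le_div_iff₀ hr]; exact hw
    refine ENNReal.ofReal_le_ofReal ?_
    rw [hfw, abs_mul, div_eq_mul_inv, mul_comm |c|]
    calc |t| * |c| ≤ (1 / r) * |c| := mul_le_mul_of_nonneg_right htle (abs_nonneg _)
      _ = r⁻¹ * |c| := by rw [one_div]
  · have hw : rhoP F (((r⁻¹ • (⟨f₀, mem_self f₀⟩ : (ℝ ∙ f₀))) : (ℝ ∙ f₀)) : Cp Z) ≤ 1 := by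
      show rhoP F (r⁻¹ • f₀) ≤ 1
      rw [rhoP_smul, abs_of_nonneg (inv_nonneg.mpr hr.le), inv_mul_cancel₀ hr.ne']
    have := le_chi (ρ := fun w : (ℝ ∙ f₀) => rhoP F (w : Cp Z)) (g := f) hw
    refine le_trans (le_of_eq ?_) this
    rw [map_smul, smul_eq_mul, abs_mul, abs_inv, abs_of_nonneg hr.le, ← hc]
    rw [div_eq_mul_inv, mul_comm]

lemma rhoP_pos_of_lt_top (F : Finset Z) (f : (ℝ ∙ f₀) →L[ℝ] ℝ)
    (hc : f ⟨f₀, mem_self f₀⟩ ≠ 0) (hlt : chiSub (ℝ ∙ f₀) (rhoP F) f < ⊤) :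
    0 < rhoP F f₀ := by
  rcases lt_or_eq_of_le (rhoP_nonneg (F := F) (f := f₀)) with h | h
  · exact h
  set c := f ⟨f₀, mem_self f₀⟩ with hcc
  exfalso
  set T := (chiSub (ℝ ∙ f₀) (rhoP F) f).toReal with hT
  obtain ⟨n, hn⟩ := exists_nat_gt (T / |c|)
  have hkey : ∀ t : ℝ, ENNReal.ofReal (|t| * |c|) ≤ chiSub (ℝ ∙ f₀) (rhoP F) f := by
    intro t
    have hw : rhoP F (((t • (⟨f₀, mem_self f₀⟩ : (ℝ ∙ f₀))) : (ℝ ∙ f₀)) : Cp Z) ≤ 1 := by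
      show rhoP F (t • f₀) ≤ 1
      rw [rhoP_smul, ← h, mul_zero]; exact zero_le_one
    have := le_chi (ρ := fun w : (ℝ ∙ f₀) => rhoP F (w : Cp Z)) (g := f) hw
    refine le_trans (le_of_eq ?_) this
    rw [map_smul, smul_eq_mul, abs_mul, ← hcc]
  have h2 := hkey n
  rw [← ENNReal.ofReal_toReal hlt.ne, ENNReal.ofReal_le_ofReal_iff ENNReal.toReal_nonneg,
    ← hT] at h2
  have hc0 : 0 < |c| := abs_pos.mpr hc
  rw [div_lt_iff₀ hc0] at hn
  have : |(n : ℝ)| = (n : ℝ) := abs_of_nonneg (Nat.cast_nonneg n)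
  rw [this] at h2
  linarith

end Span

section Backward
variable {Z : Type*} [TopologicalSpace Z] [T35Space Z]

@[simp] lemma smul_ev_apply (b : ℝ) (x : Z) (h : Cp Z) :
    (b • ev x) h = b * (h : Z → ℝ) x := rfl

lemma exists_ne_zero {f₀ : Cp Z} (hf₀ : f₀ ≠ 0) : ∃ y, (f₀ : Z → ℝ) y ≠ 0 := by
  by_contra hc
  push_neg at hc
  exact hf₀ (Subtype.ext (funext hc))

lemma backward_dir {f₀ : Cp Z} (hf₀ : f₀ ≠ 0)
    (hEU : ∃! x₀ : Z, ∀ y : Z, |(f₀ : Z → ℝ) y| ≤ |(f₀ : Z → ℝ) x₀|) :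
    SNP (fun F : Finset Z => rhoP F) (ℝ ∙ f₀) := by
  obtain ⟨x₀, hx₀, huniq⟩ := hEU
  obtain ⟨y, hy⟩ := exists_ne_zero hf₀
  set M := |(f₀ : Z → ℝ) x₀| with hMdef
  have hM : 0 < M := lt_of_lt_of_le (abs_pos.mpr hy) (hx₀ y)
  have hfx₀ : (f₀ : Z → ℝ) x₀ ≠ 0 := fun h => by simp [hMdef, h] at hM
  intro f
  set c := f ⟨f₀, mem_self f₀⟩ with hcdef
  have hrF : rhoP ({x₀} : Finset Z) f₀ = M := by
    refine le_antisymm (rhoP_le (abs_nonneg _) fun z hz => ?_) (le_rhoP (Finset.mem_singleton_self x₀))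
    rw [Finset.mem_singleton] at hz; subst hz; exact le_rfl
  refine ⟨{x₀}, ?_, ((c / (f₀ : Z → ℝ) x₀) • ev x₀), ?_⟩
  · rw [chiSub_span f₀ _ f (hrF ▸ hM)]
    exact ENNReal.ofReal_lt_top
  intro G hGle
  have hx₀G : x₀ ∈ G := by
    by_contra hn
    obtain ⟨e, he1, he2⟩ := exists_sep G hn
    have h1 := hGle e
    have h2 : (1 : ℝ) ≤ rhoP ({x₀} : Finset Z) e := by
      have := le_rhoP (f := e) (Finset.mem_singleton_self x₀)
      rwa [he1, abs_one] at this
    have h3 : rhoP G e ≤ 0 := rhoP_le le_rfl fun z hz => by rw [he2 z hz]; simp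
    linarith
  have hrG : rhoP G f₀ = M :=
    le_antisymm (rhoP_le (abs_nonneg _) fun z _ => hx₀ z) (le_rhoP hx₀G)
  have hrGpos : 0 < rhoP G f₀ := hrG ▸ hM
  have hchiSub : chiSub (ℝ ∙ f₀) (rhoP G) f = ENNReal.ofReal (|c| / M) := by
    rw [chiSub_span f₀ G f hrGpos, hrG, hcdef]
  classical
  have hgft : ∀ h : Cp Z, ((c / (f₀ : Z → ℝ) x₀) • ev x₀) h
      = ∑ u ∈ G, (if u = x₀ then c / (f₀ : Z → ℝ) x₀ else 0) * (h : Z → ℝ) u := by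
    intro h
    rw [Finset.sum_eq_single x₀ (fun b _ hb => by rw [if_neg hb, zero_mul])
      (fun hn => absurd hx₀G hn), if_pos rfl]
    rfl
  have hsum_abs : ∑ u ∈ G, |if u = x₀ then c / (f₀ : Z → ℝ) x₀ else 0| = |c| / M := by
    rw [Finset.sum_eq_single x₀ (fun b _ hb => by rw [if_neg hb, abs_zero])
      (fun hn => absurd hx₀G hn), if_pos rfl, abs_div, hMdef]
  have hft_HBE : IsHBE (ℝ ∙ f₀) (rhoP G) f ((c / (f₀ : Z → ℝ) x₀) • ev x₀) := by
    constructor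
    · ext w
      obtain ⟨t, ht⟩ := Submodule.mem_span_singleton.mp w.2
      have hwt : w = t • (⟨f₀, mem_self f₀⟩ : (ℝ ∙ f₀)) := Subtype.ext ht.symm
      show ((c / (f₀ : Z → ℝ) x₀) • ev x₀) (w : Cp Z) = f w
      rw [hwt, map_smul, smul_eq_mul, ← hcdef]
      show (c / (f₀ : Z → ℝ) x₀) * ((t • f₀ : Cp Z) : Z → ℝ) x₀ = t * c
      rw [coe_smul]
      field_simp
    · rw [chi_dirac hgft, hchiSub, hsum_abs]
  refine ⟨hft_HBE, fun g hg => ?_⟩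
  obtain ⟨hg1, hg2⟩ := hg
  have hgf₀ : g f₀ = c := by
    have := DFunLike.congr_fun hg1 ⟨f₀, mem_self f₀⟩
    exact this
  rw [hchiSub] at hg2
  -- vanishing
  have hw : rhoP G ((M⁻¹ : ℝ) • f₀) ≤ 1 := by
    rw [rhoP_smul, hrG, abs_of_nonneg (inv_nonneg.mpr hM.le), inv_mul_cancel₀ hM.ne']
  have hgw : |g ((M⁻¹ : ℝ) • f₀)| = |c| / M := by
    rw [map_smul, smul_eq_mul, hgf₀, abs_mul, abs_inv, abs_of_nonneg hM.le, div_eq_mul_inv,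
      mul_comm]
  have hvan : ∀ h : Cp Z, (∀ x ∈ G, (h : Z → ℝ) x = 0) → g h = 0 := by
    intro h hh
    exact vanish hw (le_of_eq (hg2.trans (by rw [hgw]))) hh
  obtain ⟨a, ha⟩ := rep hvan
  have hsumabs : ∑ u ∈ G, |a u| = |c| / M := by
    have := (chi_dirac ha).symm.trans hg2
    rw [ENNReal.ofReal_eq_ofReal_iff (Finset.sum_nonneg fun _ _ => abs_nonneg _)
      (div_nonneg (abs_nonneg _) hM.le)] at this
    exact this
  have hsumf : ∑ u ∈ G, a u * (f₀ : Z → ℝ) u = c := (ha f₀).symm.trans hgf₀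
  have hzero : ∀ u ∈ G, u ≠ x₀ → a u = 0 := by
    have hle1 : |c| ≤ ∑ u ∈ G, |a u| * |(f₀ : Z → ℝ) u| := by
      calc |c| = |∑ u ∈ G, a u * (f₀ : Z → ℝ) u| := by rw [hsumf]
        _ ≤ ∑ u ∈ G, |a u * (f₀ : Z → ℝ) u| := Finset.abs_sum_le_sum_abs _ _
        _ = ∑ u ∈ G, |a u| * |(f₀ : Z → ℝ) u| := by
            exact Finset.sum_congr rfl fun u _ => abs_mul _ _
    have hsplit : ∑ u ∈ G, |a u| * (M - |(f₀ : Z → ℝ) u|) = 0 := by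
      have expand : ∑ u ∈ G, |a u| * (M - |(f₀ : Z → ℝ) u|)
          = (∑ u ∈ G, |a u|) * M - ∑ u ∈ G, |a u| * |(f₀ : Z → ℝ) u| := by
        rw [Finset.sum_mul, ← Finset.sum_sub_distrib]
        exact Finset.sum_congr rfl fun u _ => by ring
      have h2 : (∑ u ∈ G, |a u|) * M = |c| := by
        rw [hsumabs, div_mul_cancel₀ _ hM.ne']
      have h3 : ∑ u ∈ G, |a u| * (M - |(f₀ : Z → ℝ) u|) ≤ 0 := by
        rw [expand, h2]; linarith
      have h4 : 0 ≤ ∑ u ∈ G, |a u| * (M - |(f₀ : Z → ℝ) u|) :=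
        Finset.sum_nonneg fun u _ => mul_nonneg (abs_nonneg _) (by linarith [hx₀ u])
      linarith
    intro u hu hne
    by_contra ha0
    have := (Finset.sum_eq_zero_iff_of_nonneg
      (fun u _ => mul_nonneg (abs_nonneg _) (by linarith [hx₀ u]))).mp hsplit u hu
    rcases mul_eq_zero.mp this with h | h
    · exact ha0 (abs_eq_zero.mp h)
    · have hfu : |(f₀ : Z → ℝ) u| = M := by linarith
      exact hne (huniq u fun z => hfu ▸ hx₀ z)
  have hax₀ : a x₀ * (f₀ : Z → ℝ) x₀ = c := by
    rw [← hsumf, Finset.sum_eq_single x₀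
      (fun b hb hbne => by rw [hzero b hb hbne, zero_mul]) (fun hn => absurd hx₀G hn)]
  have hax₀' : a x₀ = c / (f₀ : Z → ℝ) x₀ := (eq_div_iff hfx₀).mpr hax₀
  ext h
  rw [ha h, Finset.sum_eq_single x₀
    (fun b hb hbne => by rw [hzero b hb hbne, zero_mul]) (fun hn => absurd hx₀G hn), hax₀']
  rfl

end Backward

section Forward
variable {Z : Type*} [TopologicalSpace Z] [T35Space Z]

/-- truncation of a continuous function to `[-1,1]`. -/
def trunc (h : Cp Z) : Cp Z :=
  ⟨fun z => max (-1) (min 1 ((h : Z → ℝ) z)), by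
    have : Continuous (h : Z → ℝ) := h.2
    exact continuous_const.max (continuous_const.min this)⟩

lemma trunc_abs_le (h : Cp Z) (z : Z) : |(trunc h : Z → ℝ) z| ≤ 1 := by
  rw [abs_le]
  constructor
  · exact le_max_left _ _
  · exact max_le (by norm_num) (min_le_left _ _)

lemma trunc_eq (h : Cp Z) (z : Z) (hz : |(h : Z → ℝ) z| ≤ 1) :
    (trunc h : Z → ℝ) z = (h : Z → ℝ) z := by
  rw [abs_le] at hz
  show max (-1) (min 1 ((h : Z → ℝ) z)) = _
  rw [min_eq_right hz.2, max_eq_right hz.1]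

lemma forward_dir {f₀ : Cp Z} (hf₀ : f₀ ≠ 0)
    (hSNP : SNP (fun F : Finset Z => rhoP F) (ℝ ∙ f₀)) :
    ∃! x₀ : Z, ∀ y : Z, |(f₀ : Z → ℝ) y| ≤ |(f₀ : Z → ℝ) x₀| := by
  obtain ⟨y, hy⟩ := exists_ne_zero hf₀
  set f : (ℝ ∙ f₀) →L[ℝ] ℝ :=
    ((f₀ : Z → ℝ) y)⁻¹ • ((ev y).comp (ℝ ∙ f₀).subtypeL) with hfdef
  have hc : f ⟨f₀, mem_self f₀⟩ = 1 := by
    show ((f₀ : Z → ℝ) y)⁻¹ * (f₀ : Z → ℝ) y = 1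
    exact inv_mul_cancel₀ hy
  obtain ⟨F, hFlt, ft, hft⟩ := hSNP f
  have hr : 0 < rhoP F f₀ :=
    rhoP_pos_of_lt_top f₀ F f (by rw [hc]; exact one_ne_zero) hFlt
  have hext : ft f₀ = 1 := by
    have h1 := DFunLike.congr_fun (hft F (fun v => le_rfl)).1.1 ⟨f₀, mem_self f₀⟩
    rw [hc] at h1
    exact h1
  have hchiG : ∀ G : Finset Z, F ⊆ G →
      chi (rhoP G) ft = ENNReal.ofReal (1 / rhoP G f₀) := by
    intro G hG
    rw [(hft G (fun v => rhoP_mono hG)).1.2,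
      chiSub_span f₀ G f (lt_of_lt_of_le hr (rhoP_mono hG)), hc, abs_one]
  have hvanF : ∀ G : Finset Z, F ⊆ G →
      ∀ h : Cp Z, (∀ x ∈ G, (h : Z → ℝ) x = 0) → ft h = 0 := by
    intro G hG h hh
    have hrG : 0 < rhoP G f₀ := lt_of_lt_of_le hr (rhoP_mono hG)
    have hw : rhoP G (((rhoP G f₀)⁻¹ : ℝ) • f₀) ≤ 1 := by
      rw [rhoP_smul, abs_of_nonneg (inv_nonneg.mpr hrG.le), inv_mul_cancel₀ hrG.ne']
    have hchile : chi (rhoP G) ft ≤ ENNReal.ofReal |ft (((rhoP G f₀)⁻¹ : ℝ) • f₀)| := by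
      rw [hchiG G hG, map_smul, smul_eq_mul, hext, mul_one, abs_inv,
        abs_of_nonneg rhoP_nonneg, one_div]
    exact vanish hw hchile hh
  have hbound : ∀ y' : Z, |(f₀ : Z → ℝ) y'| ≤ rhoP F f₀ := by
    intro y'
    set G := insert y' F with hGdef
    have hG : F ⊆ G := Finset.subset_insert _ _
    have hrG : 0 < rhoP G f₀ := lt_of_lt_of_le hr (rhoP_mono hG)
    have h1 : chi (rhoP F) ft ≤ chi (rhoP G) ft := by
      refine iSup₂_le fun h hh => ?_
      simp only [Set.mem_setOf_eq] at hh
      have hkey : ft (trunc h) = ft h := by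
        have h0 : ft (h - trunc h) = 0 := by
          refine hvanF F subset_rfl _ fun x hx => ?_
          show (h : Z → ℝ) x - (trunc h : Z → ℝ) x = 0
          rw [trunc_eq h x (le_trans (le_rhoP hx) hh)]; ring
        rw [map_sub, sub_eq_zero] at h0
        exact h0.symm
      have h2 : rhoP G (trunc h) ≤ 1 := rhoP_le zero_le_one fun x _ => trunc_abs_le h x
      calc ENNReal.ofReal |ft h| = ENNReal.ofReal |ft (trunc h)| := by rw [hkey]
        _ ≤ chi (rhoP G) ft := le_chi h2
    rw [hchiG F subset_rfl, hchiG G hG,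
      ENNReal.ofReal_le_ofReal_iff (by positivity)] at h1
    have h3 : rhoP G f₀ ≤ rhoP F f₀ := le_of_one_div_le_one_div hr h1
    have hmem : y' ∈ G := by rw [hGdef]; exact Finset.mem_insert_self y' F
    exact le_trans (le_rhoP hmem) h3
  -- existence of a maximum point
  have hFne : F.Nonempty := by
    by_contra hne
    have : rhoP F f₀ ≤ 0 :=
      rhoP_le le_rfl fun x hx => absurd ⟨x, hx⟩ hne
    linarith
  obtain ⟨xs, hxsF, hxs⟩ := rhoP_exists_max (f := f₀) hFne
  refine ⟨xs, fun y' => hxs ▸ hbound y', ?_⟩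
  -- uniqueness of the maximum point
  intro x hx
  by_contra hne
  have hMx : |(f₀ : Z → ℝ) x| = rhoP F f₀ :=
    le_antisymm (hbound x) (hxs ▸ hx xs)
  have hMxs : |(f₀ : Z → ℝ) xs| = rhoP F f₀ := hxs.symm
  have hfx : (f₀ : Z → ℝ) x ≠ 0 := abs_pos.mp (hMx ▸ hr)
  have hfxs : (f₀ : Z → ℝ) xs ≠ 0 := abs_pos.mp (hMxs ▸ hr)
  set G := insert x (insert xs F) with hGdef
  have hG : F ⊆ G := fun z hz => by
    rw [hGdef]; exact Finset.mem_insert_of_mem (Finset.mem_insert_of_mem hz)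
  have hxG : x ∈ G := by rw [hGdef]; exact Finset.mem_insert_self _ _
  have hxsG : xs ∈ G := by
    rw [hGdef]; exact Finset.mem_insert_of_mem (Finset.mem_insert_self _ _)
  have hrhoG : rhoP G f₀ = rhoP F f₀ :=
    le_antisymm (rhoP_le rhoP_nonneg fun z _ => hbound z) (rhoP_mono hG)
  have hrGpos : 0 < rhoP G f₀ := hrhoG ▸ hr
  classical
  have hclaim : ∀ z : Z, z ∈ G → |(f₀ : Z → ℝ) z| = rhoP F f₀ →
      IsHBE (ℝ ∙ f₀) (rhoP G) f (((f₀ : Z → ℝ) z)⁻¹ • ev z) := by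
    intro z hzG hMz
    have hfz : (f₀ : Z → ℝ) z ≠ 0 := abs_pos.mp (hMz ▸ hr)
    constructor
    · ext w
      obtain ⟨t, ht⟩ := Submodule.mem_span_singleton.mp w.2
      have hwt : w = t • (⟨f₀, mem_self f₀⟩ : (ℝ ∙ f₀)) := Subtype.ext ht.symm
      show (((f₀ : Z → ℝ) z)⁻¹ • ev z) (w : Cp Z) = f w
      rw [hwt, map_smul, smul_eq_mul, hc, mul_one]
      show ((f₀ : Z → ℝ) z)⁻¹ * ((t • f₀ : Cp Z) : Z → ℝ) z = t
      rw [coe_smul]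
      field_simp
    · have hgz : ∀ h : Cp Z, (((f₀ : Z → ℝ) z)⁻¹ • ev z) h
          = ∑ u ∈ G, (if u = z then ((f₀ : Z → ℝ) z)⁻¹ else 0) * (h : Z → ℝ) u := by
        intro h
        rw [Finset.sum_eq_single z (fun b _ hb => by rw [if_neg hb, zero_mul])
          (fun hn => absurd hzG hn), if_pos rfl]
        rfl
      rw [chi_dirac hgz, chiSub_span f₀ G f hrGpos, hc, abs_one,
        Finset.sum_eq_single z (fun b _ hb => by rw [if_neg hb, abs_zero])
          (fun hn => absurd hzG hn), if_pos rfl, abs_inv, hMz, one_div, hrhoG]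
  have huniq := (hft G (fun v => rhoP_mono hG)).2
  have hg1 := huniq _ (hclaim x hxG hMx)
  have hg2 := huniq _ (hclaim xs hxsG hMxs)
  obtain ⟨e, he1, he2⟩ := exists_sep ({xs} : Finset Z)
    (Finset.notMem_singleton.mpr hne)
  have heq := DFunLike.congr_fun (hg1.trans hg2.symm) e
  have hL : (((f₀ : Z → ℝ) x)⁻¹ • ev x) e = ((f₀ : Z → ℝ) x)⁻¹ := by
    show ((f₀ : Z → ℝ) x)⁻¹ * (e : Z → ℝ) x = _
    rw [he1, mul_one]
  have hR : (((f₀ : Z → ℝ) xs)⁻¹ • ev xs) e = 0 := by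
    show ((f₀ : Z → ℝ) xs)⁻¹ * (e : Z → ℝ) xs = 0
    rw [he2 xs (Finset.mem_singleton_self xs), mul_zero]
  rw [hL, hR] at heq
  exact inv_ne_zero hfx heq

end Forward

theorem statement18 {Z : Type*} [TopologicalSpace Z] [Nonempty Z] [T35Space Z]
    (f₀ : Cp Z) (hf₀ : f₀ ≠ 0) :
    SNP (fun F : Finset Z => rhoP F) (ℝ ∙ f₀) ↔
      ∃! x₀ : Z, ∀ y : Z, |(f₀ : Z → ℝ) y| ≤ |(f₀ : Z → ℝ) x₀| :=
  ⟨fun h => forward_dir hf₀ h, fun h => backward_dir hf₀ h⟩
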